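/- arXiv:math/0502565 — 7 statements merged into one kernel-verified Lean document; each statement's English description precedes it below -/
import Mathlib

section
/- Let K be a field and let K̃ denote the set of arithmetically fixed elements of K. Then K̃ is a subfield of K; that is, 0 ∈ K̃, 1 ∈ K̃, K̃ is closed under addition and multiplication, closed under additive inverses, and closed under multiplicative inverses of nonzero elements. -/
/-- A map `f` is *arithmetic* on a subset `A` of a field `K` if it satisfies:
(1) if `1 ∈ A` then `f 1 = 1`;
(2) if `a, b ∈ A` and `a + b ∈ A` then `f (a + b) = f a + f b`;
(3) if `a, b ∈ A` and `a * b ∈ A` then `f (a * b) = f a * f b`.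
(Only the values of `f` on `A` matter.) -/
def ArithmeticMap {K : Type*} [Field K] (A : Set K) (f : K → K) : Prop :=
  ((1 : K) ∈ A → f 1 = 1) ∧
  (∀ a b : K, a ∈ A → b ∈ A → a + b ∈ A → f (a + b) = f a + f b) ∧
  (∀ a b : K, a ∈ A → b ∈ A → a * b ∈ A → f (a * b) = f a * f b)

/-- An element `r` of a field `K` is *arithmetically fixed* if there is a finite set
`A ⊆ K` with `r ∈ A` such that every arithmetic map `f : A → K` fixes `r`. -/
def ArithFixed {K : Type*} [Field K] (r : K) : Prop :=
  ∃ A : Finset K, r ∈ A ∧ ∀ f : K → K, ArithmeticMap (↑A : Set K) f → f r = r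

/-!
An arithmetic map on a larger finite set restricts to an arithmetic map on any subset, so
finitely many arithmetically fixed elements are fixed simultaneously by every arithmetic map on
the union of their witness sets. Adding to that union the few elements occurring in an identity
such as `a + (-a) = 0` or `a * a⁻¹ = 1` forces every arithmetic map to fix the new element too.
-/

namespace ArithmeticMap

variable {K : Type*} [Field K] {A B : Set K} {f : K → K}

theorem mono (hAB : A ⊆ B) (h : ArithmeticMap B f) : ArithmeticMap A f :=
  ⟨fun h1 => h.1 (hAB h1),
   fun a b ha hb hab => h.2.1 a b (hAB ha) (hAB hb) (hAB hab),
   fun a b ha hb hab => h.2.2 a b (hAB ha) (hAB hb) (hAB hab)⟩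

theorem map_zero (h : ArithmeticMap A f) (h0 : (0 : K) ∈ A) : f 0 = 0 := by
  have h00 := h.2.1 0 0 h0 h0 (by rwa [add_zero])
  rwa [add_zero, left_eq_add] at h00

theorem map_neg (h : ArithmeticMap A f) {a : K} (h0 : (0 : K) ∈ A) (ha : a ∈ A)
    (hna : -a ∈ A) : f (-a) = -f a := by
  have hsum := h.2.1 a (-a) ha hna (by rwa [add_neg_cancel])
  rw [add_neg_cancel, h.map_zero h0] at hsum
  exact eq_neg_of_add_eq_zero_right hsum.symm

theorem map_inv (h : ArithmeticMap A f) {a : K} (ha0 : a ≠ 0) (h1 : (1 : K) ∈ A) (ha : a ∈ A)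
    (hia : a⁻¹ ∈ A) : f a⁻¹ = (f a)⁻¹ := by
  have hprod := h.2.2 a a⁻¹ ha hia (by rwa [mul_inv_cancel₀ ha0])
  rw [mul_inv_cancel₀ ha0, h.1 h1] at hprod
  exact eq_inv_of_mul_eq_one_right hprod.symm

end ArithmeticMap

namespace ArithFixed

variable {K : Type*} [Field K]

theorem exists_finset_fixing (s : Finset K) (hs : ∀ x ∈ s, ArithFixed x) :
    ∃ A : Finset K, s ⊆ A ∧ ∀ f : K → K, ArithmeticMap (↑A : Set K) f → ∀ x ∈ s, f x = x := by
  classical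
  induction s using Finset.induction_on with
  | empty => exact ⟨∅, subset_rfl, by simp⟩
  | insert a s _ ih =>
    obtain ⟨A, hsA, hA⟩ := ih fun x hx => hs x (Finset.mem_insert_of_mem hx)
    obtain ⟨B, haB, hB⟩ := hs a (Finset.mem_insert_self a s)
    refine ⟨A ∪ B, Finset.insert_subset (Finset.mem_union_right A haB)
      (hsA.trans Finset.subset_union_left), fun f hf => ?_⟩
    rw [Finset.coe_union] at hf
    simp only [Finset.mem_insert, forall_eq_or_imp]
    exact ⟨hB f (hf.mono Set.subset_union_right), hA f (hf.mono Set.subset_union_left)⟩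

theorem of_forall_fixing {r : K} (s S : Finset K) (hs : ∀ x ∈ s, ArithFixed x) (hr : r ∈ S)
    (h : ∀ f : K → K, ArithmeticMap (↑s ∪ ↑S : Set K) f → (∀ x ∈ s, f x = x) → f r = r) :
    ArithFixed r := by
  classical
  obtain ⟨A, hsA, hA⟩ := exists_finset_fixing s hs
  refine ⟨A ∪ S, Finset.mem_union_right A hr, fun f hf => h f (hf.mono ?_) ?_⟩
  · exact_mod_cast Finset.union_subset_union hsA subset_rfl
  · exact hA f (hf.mono (by exact_mod_cast Finset.subset_union_left))

end ArithFixed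

/-- The set `K̃` of arithmetically fixed elements of a field `K` is a subfield of `K`. -/
theorem arithFixed_subfield (K : Type*) [Field K] :
    ArithFixed (0 : K) ∧
    ArithFixed (1 : K) ∧
    (∀ a b : K, ArithFixed a → ArithFixed b → ArithFixed (a + b)) ∧
    (∀ a b : K, ArithFixed a → ArithFixed b → ArithFixed (a * b)) ∧
    (∀ a : K, ArithFixed a → ArithFixed (-a)) ∧
    (∀ a : K, a ≠ 0 → ArithFixed a → ArithFixed a⁻¹) := by
  classical
  refine ⟨⟨{0}, by simp, fun f hf => hf.map_zero (by simp)⟩,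
    ⟨{1}, by simp, fun f hf => hf.1 (by simp)⟩, ?_, ?_, ?_, ?_⟩
  · intro a b ha hb
    refine .of_forall_fixing {a, b} {a + b} (by simpa using ⟨ha, hb⟩) (by simp) fun f hf hfix => ?_
    rw [hf.2.1 a b (by simp) (by simp) (by simp), hfix a (by simp), hfix b (by simp)]
  · intro a b ha hb
    refine .of_forall_fixing {a, b} {a * b} (by simpa using ⟨ha, hb⟩) (by simp) fun f hf hfix => ?_
    rw [hf.2.2 a b (by simp) (by simp) (by simp), hfix a (by simp), hfix b (by simp)]
  · intro a ha
    refine .of_forall_fixing {a} {0, -a} (by simpa using ha) (by simp) fun f hf hfix => ?_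
    rw [hf.map_neg (by simp) (by simp) (by simp), hfix a (by simp)]
  · intro a ha0 ha
    refine .of_forall_fixing {a} {1, a⁻¹} (by simpa using ha) (by simp) fun f hf hfix => ?_
    rw [hf.map_inv ha0 (by simp) (by simp) (by simp), hfix a (by simp)]
end

section
/- Let K be an arbitrary field. Then no subfield of K that is contained in K̃ is algebraically closed; that is, for every subfield F of K with F ⊆ K̃, the field F is not algebraically closed. -/
/-!
Let `k` be the prime field. Since `k` is perfect but not algebraically closed, some irreducible
`p ∈ k[X]` has two distinct roots `r ≠ s` in an algebraically closed `F ⊆ K`. For any finite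
`A ∋ r`, the `k`-algebra `R` generated by `A` is of finite type, so by the Nullstellensatz its
residue fields at maximal ideals are finite over `k` and embed into `F` with `r ↦ s`. The
resulting ring homomorphism `R → K`, extended arbitrarily outside `R`, is arithmetic on `A` and
moves `r`.
-/

open Polynomial

theorem exists_algHom_apply_eq_of_isAlgebraic {k E L : Type*} [Field k] [Field E] [Field L]
    [Algebra k E] [Algebra k L] [Algebra.IsAlgebraic k E] [IsAlgClosed L] {p : k[X]}
    (hp : Irreducible p) {x : E} (hx : aeval x p = 0) {y : L} (hy : aeval y p = 0) :
    ∃ φ : E →ₐ[k] L, φ x = y := by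
  have hxint : IsIntegral k x := Algebra.IsIntegral.isIntegral x
  have hdvd : p ∣ minpoly k x := (minpoly.irreducible hxint).dvd_symm hp (minpoly.dvd k x hx)
  exact IntermediateField.exists_algHom_of_splits_of_aeval
    (fun s => ⟨Algebra.IsIntegral.isIntegral s, IsAlgClosed.splits _⟩)
    (aeval_eq_zero_of_dvd_aeval_eq_zero hdvd hy)

theorem exists_algHom_apply_eq_of_finiteType {k R L : Type*} [Field k] [CommRing R] [Nontrivial R]
    [Field L] [Algebra k R] [Algebra k L] [Algebra.FiniteType k R] [IsAlgClosed L] {p : k[X]}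
    (hp : Irreducible p) {x : R} (hx : aeval x p = 0) {y : L} (hy : aeval y p = 0) :
    ∃ φ : R →ₐ[k] L, φ x = y := by
  obtain ⟨m, hm⟩ := Ideal.exists_maximal R
  let := Ideal.Quotient.field m
  have : Algebra.FiniteType k (R ⧸ m) :=
    .of_surjective (Ideal.Quotient.mkₐ k m) (Ideal.Quotient.mkₐ_surjective k m)
  have : Module.Finite k (R ⧸ m) := finite_of_finite_type_of_isJacobsonRing k _
  obtain ⟨φ, hφ⟩ := exists_algHom_apply_eq_of_isAlgebraic hp
    (x := Ideal.Quotient.mkₐ k m x) (by rw [aeval_algHom_apply, hx, map_zero]) hy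
  exact ⟨φ.comp (Ideal.Quotient.mkₐ k m), hφ⟩

theorem ArithmeticMap.of_ringHom {K S : Type*} [Field K] [SetLike S K] [SubringClass S K]
    {R : S} (φ : R →+* K) {A : Set K} (hA : A ⊆ R) {f : K → K}
    (hf : ∀ x (hx : x ∈ R), f x = φ ⟨x, hx⟩) : ArithmeticMap A f := by
  refine ⟨fun _ => ?_, fun a b ha hb _ => ?_, fun a b ha hb _ => ?_⟩
  · rw [hf 1 (one_mem R)]
    exact map_one φ
  · rw [hf _ (add_mem (hA ha) (hA hb)), hf a (hA ha), hf b (hA hb)]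
    exact map_add φ ⟨a, hA ha⟩ ⟨b, hA hb⟩
  · rw [hf _ (mul_mem (hA ha) (hA hb)), hf a (hA ha), hf b (hA hb)]
    exact map_mul φ ⟨a, hA ha⟩ ⟨b, hA hb⟩

theorem not_arithFixed_of_aeval_eq_zero {k K L : Type*} [Field k] [Field K] [Field L]
    [Algebra k K] [Algebra k L] [IsAlgClosed L] (ι : L →ₐ[k] K) {p : k[X]} (hp : Irreducible p)
    {r : K} (hr : aeval r p = 0) {s : L} (hs : aeval s p = 0) (hne : ι s ≠ r) :
    ¬ ArithFixed r := by
  rintro ⟨A, hrA, hfix⟩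
  set R := Algebra.adjoin k (A : Set K)
  have hAR : (A : Set K) ⊆ R := Algebra.subset_adjoin
  have : Algebra.FiniteType k R :=
    (Subalgebra.fg_iff_finiteType R).mp (Subalgebra.fg_adjoin_finset _)
  obtain ⟨φ, hφ⟩ := exists_algHom_apply_eq_of_finiteType hp (x := ⟨r, hAR hrA⟩)
    (Subtype.ext (by rw [← Subalgebra.coe_val, ← aeval_algHom_apply]; simpa using hr)) hs
  have hf (x : K) (hx : x ∈ R) :
      Function.extend ((↑) : R → K) (ι.comp φ) 0 x = ι (φ ⟨x, hx⟩) :=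
    Subtype.val_injective.extend_apply (ι.comp φ) 0 ⟨x, hx⟩
  have hfr := hfix _ (ArithmeticMap.of_ringHom (ι.comp φ : R →+* K) hAR (hf · ·))
  exact hne (by rwa [hf r (hAR hrA), hφ] at hfr)

theorem exists_irreducible_with_distinct_roots {k L : Type*} [Field k] [PerfectField k]
    [Field L] [Algebra k L] [IsAlgClosed L] (hk : ¬ IsAlgClosed k) :
    ∃ p : k[X], Irreducible p ∧ ∃ r s : L, aeval r p = 0 ∧ aeval s p = 0 ∧ r ≠ s := by
  obtain ⟨p, -, hp, hroot⟩ : ∃ p : k[X], p.Monic ∧ Irreducible p ∧ ∀ x, p.eval x ≠ 0 := by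
    by_contra! h
    exact hk (IsAlgClosed.of_exists_root k h)
  have hdeg : 1 < p.natDegree := by
    refine lt_of_le_of_ne hp.natDegree_pos fun h => ?_
    obtain ⟨x, hx⟩ := exists_root_of_degree_eq_one (degree_eq_iff_natDegree_eq_of_pos
      one_pos |>.mpr h.symm)
    exact hroot x hx
  classical
  have hcard : 1 < Fintype.card (p.rootSet L) := by
    rwa [card_rootSet_eq_natDegree (PerfectField.separable_of_irreducible hp)
      (IsAlgClosed.splits _)]
  obtain ⟨⟨r, hr⟩, ⟨s, hs⟩, hne⟩ := Fintype.exists_pair_of_one_lt_card hcard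
  exact ⟨p, hp, r, s, (mem_rootSet.mp hr).2, (mem_rootSet.mp hs).2, fun h => hne (by simp [h])⟩

theorem exists_not_arithFixed_of_algHom {k K L : Type*} [Field k] [PerfectField k] [Field K]
    [Field L] [Algebra k K] [Algebra k L] [IsAlgClosed L] (hk : ¬ IsAlgClosed k)
    (ι : L →ₐ[k] K) : ∃ s : L, ¬ ArithFixed (ι s) := by
  obtain ⟨p, hp, r, s, hr, hs, hne⟩ := exists_irreducible_with_distinct_roots (L := L) hk
  exact ⟨r, not_arithFixed_of_aeval_eq_zero ι hp (by rw [aeval_algHom_apply, hr, map_zero]) hs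
    (ι.injective.ne hne.symm)⟩

theorem Rat.not_isAlgClosed : ¬ IsAlgClosed ℚ := fun _ => by
  obtain ⟨x, hx⟩ := IsAlgClosed.exists_pow_nat_eq (-1 : ℚ) two_pos
  nlinarith [sq_nonneg x]

/-- For an arbitrary field `K`, no subfield of `K` contained in `K̃` is algebraically closed. -/
theorem no_algClosed_subfield_of_arithFixed (K : Type*) [Field K]
    (F : Subfield K) (hF : (F : Set K) ⊆ {r : K | ArithFixed r}) :
    ¬ IsAlgClosed F := by
  intro _
  obtain hp | h0 := CharP.char_is_prime_or_zero K (ringChar K)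
  · have : Fact (ringChar K).Prime := ⟨hp⟩
    have : CharP F (ringChar K) := F.subtype.charP F.subtype.injective _
    let := ZMod.algebra K (ringChar K)
    let := ZMod.algebra F (ringChar K)
    let ι : F →ₐ[ZMod (ringChar K)] K :=
      { F.subtype with commutes' :=
        RingHom.congr_fun (RingHom.ext_zmod (F.subtype.comp (algebraMap _ F)) (algebraMap _ K)) }
    obtain ⟨s, hs⟩ := exists_not_arithFixed_of_algHom (fun _ => not_finite (ZMod (ringChar K))) ι
    exact hs (hF s.2)
  · have : CharZero K := (CharP.ringChar_zero_iff_CharZero K).mp h0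
    obtain ⟨s, hs⟩ :=
      exists_not_arithFixed_of_algHom Rat.not_isAlgClosed F.subtype.toRatAlgHom
    exact hs (hF s.2)
end

section
/- Let K be a field of characteristic zero and let r ∈ K be arithmetically fixed. Then there exist a positive integer m and a polynomial T(x, x₁, …, x_m) with integer coefficients such that {r} = {x ∈ K : ∃x₁ … ∃x_m ∈ K, T(x, x₁, …, x_m) = 0}. -/
/-!
If some integer polynomial `P(a, b)` vanishes on `K²` only at `(0, 0)`, the finitely many
equations `x = x_r`, `x_1 = 1`, `x_{a+b} = x_a + x_b`, `x_{ab} = x_a x_b` (for `a, b ∈ A`)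
merge into one equation by nesting `P`; its solutions in `x` are the values `f r` of the
arithmetic maps `f` on `A`, that is, `r` alone.

Otherwise the homogenization of every nonconstant integer polynomial has a nontrivial zero,
so every such polynomial has a root in `K`, and `ℚ̄` embeds into `K`. By the Nullstellensatz
the finitely generated algebra `ℚ[A]` maps to `ℚ̄`; every `ℚ`-algebra map `ℚ[A] → K` fixes `r`,
so the image of `r` in `ℚ̄` is fixed by `Gal(ℚ̄/ℚ)`, hence rational, and so is `r`.
-/

open MvPolynomial Finset

def VanishesOnlyAtZero (K : Type*) [CommRing K] (P : MvPolynomial (Fin 2) ℤ) : Prop :=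
  ∀ x : Fin 2 → K, aeval x P = 0 ↔ x = 0

def DefinableBySingleEquation {K : Type*} [Field K] (r : K) : Prop :=
  ∃ (m : ℕ), 0 < m ∧ ∃ T : MvPolynomial (Fin (m + 1)) ℤ,
    ({r} : Set K) = {x : K | ∃ v : Fin m → K, aeval (Fin.cons x v) T = 0}

theorem VanishesOnlyAtZero.exists_aeval_eq_zero_iff {K : Type*} [CommRing K]
    {P : MvPolynomial (Fin 2) ℤ} (hP : VanishesOnlyAtZero K P) {σ : Type*}
    (S : Finset (MvPolynomial σ ℤ)) :
    ∃ T : MvPolynomial σ ℤ, ∀ w : σ → K, aeval w T = 0 ↔ ∀ p ∈ S, aeval w p = 0 := by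
  classical
  induction S using Finset.induction_on with
  | empty => exact ⟨0, by simp⟩
  | insert p S _ ih =>
    obtain ⟨T, hT⟩ := ih
    refine ⟨bind₁ ![p, T] P, fun w => ?_⟩
    rw [aeval_bind₁, hP, funext_iff, Fin.forall_fin_two]
    simp [hT]

section Homogenize

open Polynomial

theorem Polynomial.eval_homogenize_natDegree_of_eq_zero {K : Type*} [Field K] (q : K[X])
    {x : Fin 2 → K} (hx : x 1 = 0) :
    MvPolynomial.eval x (q.homogenize q.natDegree) = q.leadingCoeff * x 0 ^ q.natDegree := by
  rw [homogenize, MvPolynomial.eval_sum, sum_eq_single (q.natDegree, 0)]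
  · simp [MvPolynomial.eval_monomial, Finsupp.prod_fintype]
  · rintro ⟨k, l⟩ hkl hne
    have hl : l ≠ 0 := by
      rintro rfl
      simp_all
    simp [MvPolynomial.eval_monomial, Finsupp.prod_fintype, hx, hl]
  · simp

theorem Polynomial.eval_homogenize_natDegree_eq_zero_iff {K : Type*} [Field K] {q : K[X]}
    (hq : 0 < q.natDegree) (hroot : ∀ y, q.eval y ≠ 0) (x : Fin 2 → K) :
    MvPolynomial.eval x (q.homogenize q.natDegree) = 0 ↔ x = 0 := by
  have hlead : q.leadingCoeff ≠ 0 := leadingCoeff_ne_zero.2 (ne_zero_of_natDegree_gt hq)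
  constructor
  · intro h
    by_cases hx : x 1 = 0
    · rw [eval_homogenize_natDegree_of_eq_zero q hx, mul_eq_zero,
        pow_eq_zero_iff hq.ne'] at h
      ext i
      fin_cases i
      exacts [h.resolve_left hlead, hx]
    · rw [eval_homogenize le_rfl x hx, mul_eq_zero] at h
      exact absurd (h.resolve_right (pow_ne_zero _ hx)) (hroot _)
  · rintro rfl
    rw [eval_homogenize_natDegree_of_eq_zero q rfl]
    simp [hq.ne']

theorem vanishesOnlyAtZero_homogenize {K : Type*} [Field K] [CharZero K] {p : ℤ[X]}
    (hp : 0 < p.natDegree) (hroot : ∀ y : K, Polynomial.aeval y p ≠ 0) :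
    VanishesOnlyAtZero K (p.homogenize p.natDegree) := by
  have hdeg : (p.map (algebraMap ℤ K)).natDegree = p.natDegree :=
    natDegree_map_eq_of_injective (RingHom.injective_int _) p
  intro x
  rw [← eval_homogenize_natDegree_eq_zero_iff (hdeg ▸ hp)
    (fun y => by rw [eval_map_algebraMap]; exact hroot y), hdeg,
    homogenize_map, MvPolynomial.eval_map, MvPolynomial.aeval_def]

end Homogenize

open Polynomial in
theorem exists_aeval_eq_zero_of_forall_int {K : Type*} [Field K] [CharZero K]
    (h : ∀ p : ℤ[X], 0 < p.natDegree → ∃ y : K, Polynomial.aeval y p = 0) {q : ℚ[X]}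
    (hq : 0 < q.natDegree) : ∃ y : K, Polynomial.aeval y q = 0 := by
  obtain ⟨b, hbM, hb⟩ := IsLocalization.integerNormalization_spec (nonZeroDivisors ℤ) q
  set p := IsLocalization.integerNormalization (nonZeroDivisors ℤ) q
  have hb0 : b ≠ 0 := nonZeroDivisors.ne_zero hbM
  rw [← Int.cast_smul_eq_zsmul ℚ, Polynomial.smul_eq_C_mul] at hb
  have hdeg : p.natDegree = q.natDegree := by
    rw [← natDegree_map_eq_of_injective (RingHom.injective_int (algebraMap ℤ ℚ)) p, hb,
      natDegree_C_mul (by exact_mod_cast hb0)]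
  obtain ⟨y, hy⟩ := h p (hdeg ▸ hq)
  refine ⟨y, ?_⟩
  rw [← Polynomial.aeval_map_algebraMap ℚ, hb, map_mul, Polynomial.aeval_C, mul_eq_zero] at hy
  exact hy.resolve_left (by simpa using hb0)

open Polynomial in
theorem nonempty_algHom_of_forall_int {K : Type*} [Field K] [CharZero K]
    (h : ∀ p : ℤ[X], 0 < p.natDegree → ∃ y : K, Polynomial.aeval y p = 0)
    (Ω : Type*) [Field Ω] [Algebra ℚ Ω] [Algebra.IsAlgebraic ℚ Ω] : Nonempty (Ω →ₐ[ℚ] K) :=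
  Field.nonempty_algHom_of_exists_root fun x =>
    exists_aeval_eq_zero_of_forall_int h (minpoly.natDegree_pos (Algebra.IsIntegral.isIntegral x))

section ArithmeticSystem

variable {K : Type*} [Field K]

theorem arithmeticMap_of_eqOn_id {A : Set K} {f : K → K} (hf : Set.EqOn f id A) :
    ArithmeticMap A f :=
  ⟨fun h1 => hf h1, fun _ _ ha hb hab => by rw [hf ha, hf hb, hf hab]; rfl,
    fun _ _ ha hb hab => by rw [hf ha, hf hb, hf hab]; rfl⟩

theorem arithmeticMap_dite_ringHom {S : Subsemiring K}
    [DecidablePred (· ∈ S)] {A : Set K} (hA : A ⊆ S) (φ : S →+* K) :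
    ArithmeticMap A (fun y => if h : y ∈ S then φ ⟨y, h⟩ else 0) := by
  refine ⟨fun _ => ?_, fun a b ha hb _ => ?_, fun a b ha hb _ => ?_⟩ <;> dsimp only
  · rw [dif_pos S.one_mem]
    exact map_one φ
  · have ha : a ∈ S := hA ha
    have hb : b ∈ S := hA hb
    rw [dif_pos ha, dif_pos hb, dif_pos (S.add_mem ha hb)]
    exact map_add φ ⟨a, ha⟩ ⟨b, hb⟩
  · have ha : a ∈ S := hA ha
    have hb : b ∈ S := hA hb
    rw [dif_pos ha, dif_pos hb, dif_pos (S.mul_mem ha hb)]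
    exact map_mul φ ⟨a, ha⟩ ⟨b, hb⟩

open Classical in
/-- Variable `0` stands for `x`, variable `i + 1` for the value at the `i`-th element of `A`. -/
noncomputable def arithVar (A : Finset K) (a : K) : MvPolynomial (Fin (#A + 1)) ℤ :=
  if h : a ∈ A then X (A.equivFin ⟨a, h⟩).succ else 0

open Classical in
noncomputable def arithEquations (A : Finset K) (r : K) :
    Finset (MvPolynomial (Fin (#A + 1)) ℤ) :=
  insert (X 0 - arithVar A r) <|
    (if (1 : K) ∈ A then {arithVar A 1 - 1} else ∅) ∪
    ((A ×ˢ A).filter fun ab => ab.1 + ab.2 ∈ A).image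
      (fun ab => arithVar A (ab.1 + ab.2) - (arithVar A ab.1 + arithVar A ab.2)) ∪
    ((A ×ˢ A).filter fun ab => ab.1 * ab.2 ∈ A).image
      (fun ab => arithVar A (ab.1 * ab.2) - arithVar A ab.1 * arithVar A ab.2)

theorem forall_mem_arithEquations_aeval_eq_zero_iff (A : Finset K) (r : K)
    (w : Fin (#A + 1) → K) :
    (∀ p ∈ arithEquations A r, aeval w p = 0) ↔
      w 0 = aeval w (arithVar A r) ∧ ArithmeticMap A (fun a => aeval w (arithVar A a)) := by
  simp only [arithEquations, forall_mem_insert, forall_mem_union, forall_mem_image, Prod.forall,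
    mem_filter, mem_product, and_imp, map_sub, sub_eq_zero, ArithmeticMap]
  by_cases h1 : (1 : K) ∈ A <;> simp [h1, sub_eq_zero, and_assoc]

theorem aeval_cons_arithVar (A : Finset K) (x : K) {a : K} (ha : a ∈ A) :
    aeval (Fin.cons x fun i => (A.equivFin.symm i : K)) (arithVar A a) = a := by
  simp [arithVar, ha]

theorem VanishesOnlyAtZero.definableBySingleEquation {P : MvPolynomial (Fin 2) ℤ}
    (hP : VanishesOnlyAtZero K P) {r : K} (hr : ArithFixed r) :
    DefinableBySingleEquation r := by
  obtain ⟨A, hrA, hfix⟩ := hr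
  obtain ⟨T, hT⟩ := hP.exists_aeval_eq_zero_iff (arithEquations A r)
  refine ⟨#A, card_pos.2 ⟨r, hrA⟩, T, Set.ext fun x => ?_⟩
  simp only [Set.mem_singleton_iff, Set.mem_ofPred_eq, hT,
    forall_mem_arithEquations_aeval_eq_zero_iff, Fin.cons_zero]
  constructor
  · rintro rfl
    exact ⟨fun i => A.equivFin.symm i, (aeval_cons_arithVar A _ hrA).symm,
      arithmeticMap_of_eqOn_id fun _ ha => aeval_cons_arithVar A _ ha⟩
  · rintro ⟨v, hx, hf⟩
    rw [hx, hfix _ hf]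

end ArithmeticSystem

theorem nonempty_algHom_of_finiteType (k R Ω : Type*) [Field k] [CommRing R] [Nontrivial R]
    [Algebra k R] [Algebra.FiniteType k R] [Field Ω] [Algebra k Ω] [IsAlgClosed Ω] :
    Nonempty (R →ₐ[k] Ω) := by
  obtain ⟨m, hm⟩ := Ideal.exists_maximal R
  let := Ideal.Quotient.field m
  have := finite_of_finite_type_of_isJacobsonRing k (R ⧸ m)
  exact ⟨IsAlgClosed.lift.comp (Ideal.Quotient.mkₐ k m)⟩

theorem ArithFixed.exists_ratCast_eq {K : Type*} [Field K] [CharZero K] {r : K}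
    (hr : ArithFixed r) {Ω : Type*} [Field Ω] [Algebra ℚ Ω] [IsAlgClosure ℚ Ω]
    (ι : Ω →ₐ[ℚ] K) : ∃ c : ℚ, (c : K) = r := by
  classical
  obtain ⟨A, hrA, hfix⟩ := hr
  set R := Algebra.adjoin ℚ (A : Set K)
  have hrR : r ∈ R := Algebra.subset_adjoin hrA
  have fixes_r (φ : R →ₐ[ℚ] K) : φ ⟨r, hrR⟩ = r := by
    simpa [hrR] using hfix _ (arithmeticMap_dite_ringHom (S := R.toSubsemiring)
      Algebra.subset_adjoin (φ : R →+* K))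
  have : Algebra.FiniteType ℚ R :=
    (Subalgebra.fg_iff_finiteType _).mp (Subalgebra.fg_adjoin_finset A)
  have := IsAlgClosure.isAlgClosed ℚ (K := Ω)
  obtain ⟨φ⟩ := nonempty_algHom_of_finiteType ℚ R Ω
  have fixed (σ : Ω ≃ₐ[ℚ] Ω) : σ (φ ⟨r, hrR⟩) = φ ⟨r, hrR⟩ :=
    ι.injective ((fixes_r (ι.comp (σ.toAlgHom.comp φ))).trans (fixes_r (ι.comp φ)).symm)
  obtain ⟨c, hc⟩ := (InfiniteGalois.mem_range_algebraMap_iff_fixed _).mpr fixed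
  refine ⟨c, ?_⟩
  rw [← fixes_r (ι.comp φ), AlgHom.comp_apply, ← hc, AlgHom.commutes]
  simp

theorem definableBySingleEquation_ratCast {K : Type*} [Field K] [CharZero K] (c : ℚ) :
    DefinableBySingleEquation (c : K) := by
  refine ⟨1, one_pos, C (c.den : ℤ) * X 0 - C c.num, Set.ext fun x => ?_⟩
  have hden : (c.den : K) ≠ 0 := Nat.cast_ne_zero.2 c.den_nz
  simp [Rat.cast_def, sub_eq_zero, eq_div_iff hden, mul_comm]

/-- If `K` has characteristic zero and `r ∈ K̃`, then there are a positive integer `m` and a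
polynomial `T(x, x₁, …, xₘ)` with integer coefficients such that `{r}` is the set of `x ∈ K`
with `∃ x₁ … xₘ ∈ K, T(x, x₁, …, xₘ) = 0`. -/
theorem arithFixed_definable_by_single_equation (K : Type*) [Field K] [CharZero K]
    (r : K) (hr : ArithFixed r) :
    ∃ (m : ℕ), 0 < m ∧ ∃ T : MvPolynomial (Fin (m + 1)) ℤ,
      ({r} : Set K) = {x : K | ∃ v : Fin m → K, MvPolynomial.aeval (Fin.cons x v) T = 0} := by
  by_cases hP : ∃ P, VanishesOnlyAtZero K P
  · obtain ⟨P, hP⟩ := hP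
    exact hP.definableBySingleEquation hr
  · have hroots : ∀ p : Polynomial ℤ, 0 < p.natDegree → ∃ y : K, Polynomial.aeval y p = 0 := by
      by_contra! ⟨p, hp, hroot⟩
      exact hP ⟨_, vanishesOnlyAtZero_homogenize hp hroot⟩
    -- `DivisionRing.toRatAlgebra`, found by default, is not the instance the closure's API uses
    let _ : Algebra ℚ (AlgebraicClosure ℚ) := AlgebraicClosure.instAlgebra ℚ
    obtain ⟨ι⟩ := nonempty_algHom_of_forall_int hroots (AlgebraicClosure ℚ)
    obtain ⟨c, rfl⟩ := hr.exists_ratCast_eq ι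
    exact definableBySingleEquation_ratCast c
end

section
/- Let K be a field of characteristic zero and let g(x, y) be a polynomial in two variables with rational coefficients. Suppose the set P = {u ∈ K : there exists s ∈ K with g(u, s) = 0} is finite and contains an element w that is transcendental over ℚ. Then some element of K̃ is transcendental over ℚ. -/
open Polynomial in
theorem Multiset.isIntegral_of_mem_of_isIntegral_esymm {R A : Type*} [CommRing R] [CommRing A]
    [Nontrivial A] [Algebra R A] {s : Multiset A} (hs : ∀ k, IsIntegral R (s.esymm k)) {x : A}
    (hx : x ∈ s) : IsIntegral R x := by
  have hmonic : (s.map fun a => X - C a).prod.Monic :=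
    monic_multiset_prod_of_monic _ _ fun a _ => monic_X_sub_C a
  refine IsIntegral.of_aeval_monic_of_isIntegral_coeff hmonic ?_ ?_ fun i => ?_
  · rw [natDegree_multiset_prod_X_sub_C_eq_card]
    exact (Multiset.card_pos_iff_exists_mem.mpr ⟨x, hx⟩).ne'
  · have hroot : (0 : A) ∈ (s.map fun a => X - C a).map (eval x) :=
      Multiset.mem_map.mpr ⟨X - C x, Multiset.mem_map_of_mem _ hx, by simp⟩
    rw [eval_multiset_prod, Multiset.prod_eq_zero hroot]
    exact isIntegral_zero
  · rcases le_or_gt i (Multiset.card s) with hi | hi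
    · rw [Multiset.prod_X_sub_C_coeff s hi]
      exact (isIntegral_one.neg.pow _).mul (hs _)
    · rw [coeff_eq_zero_of_natDegree_lt (by rwa [natDegree_multiset_prod_X_sub_C_eq_card])]
      exact isIntegral_zero

theorem Finset.map_val_eq_of_mapsTo_of_injOn {α : Type*} {s : Finset α} {f : α → α}
    (hmaps : Set.MapsTo f s s) (hinj : Set.InjOn f s) : s.val.map f = s.val := by
  classical
  have hbij : Set.BijOn f s s := (s.finite_toSet.injOn_iff_bijOn_of_mapsTo hmaps).mp hinj
  have himg : s.image f = s :=
    Finset.coe_injective (by rw [Finset.coe_image]; exact hbij.image_eq)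
  rw [← Finset.image_val_of_injOn hinj, himg]

theorem ArithmeticMap.mono_s11 {K : Type*} [Field K] {A B : Set K} {f : K → K}
    (h : ArithmeticMap B f) (hAB : A ⊆ B) : ArithmeticMap A f :=
  ⟨fun h1 => h.1 (hAB h1), fun a b ha hb hab => h.2.1 a b (hAB ha) (hAB hb) (hAB hab),
    fun a b ha hb hab => h.2.2 a b (hAB ha) (hAB hb) (hAB hab)⟩

def ArithForced {K : Type*} [Field K] (Q : (K → K) → Prop) : Prop :=
  ∃ B : Finset K, ∀ f : K → K, ArithmeticMap (↑B : Set K) f → Q f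

theorem ArithFixed.of_arithForced {K : Type*} [Field K] {r : K}
    (h : ArithForced fun f : K → K => f r = r) : ArithFixed r := by
  classical
  obtain ⟨B, hB⟩ := h
  exact ⟨insert r B, B.mem_insert_self r, fun f hf => hB f (hf.mono_s11 (by simp))⟩

namespace ArithForced

variable {K : Type*} [Field K]

theorem mono_s11 {Q R : (K → K) → Prop} (h : ArithForced Q) (hQR : ∀ f, Q f → R f) :
    ArithForced R :=
  h.imp fun _ hB f hf => hQR f (hB f hf)

theorem and {Q R : (K → K) → Prop} (hQ : ArithForced Q) (hR : ArithForced R) :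
    ArithForced fun f => Q f ∧ R f := by
  classical
  obtain ⟨B₁, h₁⟩ := hQ
  obtain ⟨B₂, h₂⟩ := hR
  refine ⟨B₁ ∪ B₂, fun f hf => ⟨h₁ f (hf.mono_s11 ?_), h₂ f (hf.mono_s11 ?_)⟩⟩ <;> simp

theorem all {ι : Type*} [Finite ι] {Q : ι → (K → K) → Prop}
    (h : ∀ i, ArithForced (Q i)) : ArithForced fun f => ∀ i, Q i f := by
  classical
  have := Fintype.ofFinite ι
  choose B hB using h
  refine ⟨Finset.univ.biUnion B, fun f hf i => hB i f (hf.mono_s11 ?_)⟩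
  exact_mod_cast Finset.subset_biUnion_of_mem B (Finset.mem_univ i)

theorem map_one : ArithForced fun f : K → K => f 1 = 1 :=
  ⟨{1}, fun _ hf => hf.1 (Finset.mem_singleton_self 1)⟩

theorem map_add (a b : K) : ArithForced fun f : K → K => f (a + b) = f a + f b := by
  classical exact ⟨{a, b, a + b}, fun _ hf => hf.2.1 a b (by simp) (by simp) (by simp)⟩

theorem map_mul (a b : K) : ArithForced fun f : K → K => f (a * b) = f a * f b := by
  classical exact ⟨{a, b, a * b}, fun _ hf => hf.2.2 a b (by simp) (by simp) (by simp)⟩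

theorem map_zero : ArithForced fun f : K → K => f 0 = 0 :=
  (map_add (0 : K) 0).mono_s11 fun f h => by simpa using h

theorem map_neg (a : K) : ArithForced fun f : K → K => f (-a) = -f a :=
  ((map_add a (-a)).and map_zero).mono_s11 fun f ⟨hadd, hzero⟩ => by
    rw [add_neg_cancel, hzero] at hadd
    exact eq_neg_of_add_eq_zero_right hadd.symm

theorem map_natCast : ∀ n : ℕ, ArithForced fun f : K → K => f n = n
  | 0 => map_zero.mono_s11 fun f h => by simpa using h
  | n + 1 => (((map_natCast n).and map_one).and (map_add (n : K) 1)).mono_s11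
      fun f ⟨⟨hn, h1⟩, hadd⟩ => by push_cast; rw [hadd, hn, h1]

theorem map_intCast (m : ℤ) : ArithForced fun f : K → K => f m = m := by
  obtain ⟨n, rfl | rfl⟩ := m.eq_nat_or_neg
  · exact (map_natCast n).mono_s11 fun f h => by simpa using h
  · exact ((map_natCast n).and (map_neg (n : K))).mono_s11
      fun f ⟨hn, hneg⟩ => by push_cast; rw [hneg, hn]

theorem map_ne {u v : K} (huv : u ≠ v) : ArithForced fun f : K → K => f u ≠ f v := by
  have hne : u - v ≠ 0 := sub_ne_zero.mpr huv
  refine (((map_mul (u - v) (u - v)⁻¹).and map_one).and (map_add (u - v) v)).mono_s11 ?_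
  rintro f ⟨⟨hmul, hone⟩, hadd⟩ heq
  rw [mul_inv_cancel₀ hne, hone] at hmul
  rw [sub_add_cancel, heq, right_eq_add] at hadd
  simp [hadd] at hmul

theorem injOn (s : Finset K) : ArithForced fun f : K → K => Set.InjOn f s := by
  classical
  refine (all fun p : s.offDiag => map_ne (Finset.mem_offDiag.mp p.2).2.2).mono_s11 ?_
  intro f hf u hu v hv huv
  by_contra hne
  exact hf ⟨(u, v), Finset.mem_offDiag.mpr ⟨hu, hv, hne⟩⟩ huv

section CharZero

variable [CharZero K]

theorem map_ratCast (c : ℚ) : ArithForced fun f : K → K => f c = c := by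
  have hden : (c.den : K) ≠ 0 := Nat.cast_ne_zero.mpr c.den_nz
  have hnum : (c.den : K) * c = c.num := by rw [Rat.cast_def]; field_simp
  refine (((map_natCast c.den).and (map_intCast c.num)).and (map_mul (c.den : K) c)).mono_s11 ?_
  rintro f ⟨⟨hd, hn⟩, hmul⟩
  rw [hnum, hn, hd, ← hnum] at hmul
  exact mul_left_cancel₀ hden hmul.symm

theorem map_aeval {σ : Type*} (x : σ → K) (p : MvPolynomial σ ℚ) :
    ArithForced fun f : K → K => f (MvPolynomial.aeval x p) = MvPolynomial.aeval (f ∘ x) p := by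
  induction p using MvPolynomial.induction_on with
  | C c => exact (map_ratCast c).mono_s11 fun f h => by simpa using h
  | add p q hp hq =>
    exact ((hp.and hq).and (map_add (MvPolynomial.aeval x p) (MvPolynomial.aeval x q))).mono_s11
      fun f ⟨⟨hfp, hfq⟩, hadd⟩ => by simp only [_root_.map_add, hadd, hfp, hfq]
  | mul_X p i hp =>
    exact (hp.and (map_mul (MvPolynomial.aeval x p) (x i))).mono_s11 fun f ⟨hfp, hmul⟩ => by
      simp only [_root_.map_mul, MvPolynomial.aeval_X, hmul, hfp, Function.comp_apply]

theorem aeval_eq_zero {σ : Type*} {x : σ → K} {p : MvPolynomial σ ℚ}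
    (h : MvPolynomial.aeval x p = 0) :
    ArithForced fun f : K → K => MvPolynomial.aeval (f ∘ x) p = 0 :=
  ((map_aeval x p).and map_zero).mono_s11 fun f ⟨hf, hzero⟩ => by rw [← hf, h, hzero]

theorem mapsTo_of_forall_mem_iff {σ : Type*} (p : MvPolynomial σ ℚ) (i : σ) {s : Finset K}
    (hs : ∀ u, u ∈ s ↔ ∃ x : σ → K, x i = u ∧ MvPolynomial.aeval x p = 0) :
    ArithForced fun f : K → K => Set.MapsTo f s s := by
  choose x hxi hx using fun u : s => (hs u).mp u.2
  refine (all fun u => aeval_eq_zero (hx u)).mono_s11 fun f hf u hu => ?_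
  exact (hs (f u)).mpr ⟨f ∘ x ⟨u, hu⟩, congrArg f (hxi _), hf ⟨u, hu⟩⟩

theorem map_esymm (s : Finset K) (k : ℕ) :
    ArithForced fun f : K → K => f (s.val.esymm k) = (s.val.map f).esymm k := by
  have hid : s.val.esymm k = ∑ t ∈ s.powersetCard k, ∏ i ∈ t, i := by
    simpa using Finset.esymm_map_val id s k
  simpa [hid, Finset.esymm_map_val] using
    map_aeval id (∑ t ∈ s.powersetCard k, ∏ i ∈ t, MvPolynomial.X i : MvPolynomial K ℚ)

end CharZero

end ArithForced

theorem arithFixed_esymm_of_arithForced_mapsTo {K : Type*} [Field K] [CharZero K]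
    {s : Finset K} (hs : ArithForced fun f : K → K => Set.MapsTo f s s) (k : ℕ) :
    ArithFixed (s.val.esymm k) :=
  .of_arithForced <| ((hs.and (ArithForced.injOn s)).and (ArithForced.map_esymm s k)).mono_s11
    fun f ⟨⟨hmaps, hinj⟩, hf⟩ => by rw [hf, s.map_val_eq_of_mapsTo_of_injOn hmaps hinj]

/-- Let `K` be a field of characteristic zero and `g(x, y) ∈ ℚ[x, y]`. If the set
`P = {u ∈ K : ∃ s ∈ K, g(u, s) = 0}` is finite and contains an element `w` transcendental
over `ℚ`, then some arithmetically fixed element of `K` is transcendental over `ℚ`. -/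
theorem exists_arithFixed_transcendental (K : Type*) [Field K] [CharZero K]
    (g : MvPolynomial (Fin 2) ℚ)
    (hfin : {u : K | ∃ s : K, MvPolynomial.aeval ![u, s] g = 0}.Finite)
    (w : K) (hw : w ∈ {u : K | ∃ s : K, MvPolynomial.aeval ![u, s] g = 0})
    (hwt : Transcendental ℚ w) :
    ∃ r : K, ArithFixed r ∧ Transcendental ℚ r := by
  set P := hfin.toFinset
  have hP : ∀ u, u ∈ P ↔ ∃ x : Fin 2 → K, x 0 = u ∧ MvPolynomial.aeval x g = 0 := by
    simp [P, Fin.exists_fin_succ_pi]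
  have hfixed :=
    arithFixed_esymm_of_arithForced_mapsTo (ArithForced.mapsTo_of_forall_mem_iff g 0 hP)
  by_contra! hnone
  have hint (k : ℕ) : IsIntegral ℚ (P.val.esymm k) :=
    (not_not.mp (hnone _ (hfixed k))).isIntegral
  exact hwt
    (Multiset.isIntegral_of_mem_of_isIntegral_esymm hint (hfin.mem_toFinset.mpr hw)).isAlgebraic
end

section
/- Let K be a field of characteristic zero and let g(x, y) be a polynomial in two variables with rational coefficients. Suppose the set P = {u ∈ K : there exists s ∈ K with g(u, s) = 0} is finite and nonempty, say P = {u₁, …, u_n} with the u_i pairwise distinct. Then for every k ∈ {1, …, n}, the value t_k(u₁, …, u_n) of the k-th elementary symmetric polynomial at (u₁, …, u_n) is an arithmetically fixed element of K. -/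
namespace AFix

/-- Formal field terms over variables indexed by `α`. -/
inductive Term (α : Type) : Type where
  | one : Term α
  | var : α → Term α
  | add : Term α → Term α → Term α
  | mul : Term α → Term α → Term α
  | neg : Term α → Term α
  | inv : Term α → Term α

namespace Term

variable {K : Type*} [Field K] {α β : Type}

def evalT (v : α → K) : Term α → K
  | one => 1
  | var i => v i
  | add a b => a.evalT v + b.evalT v
  | mul a b => a.evalT v * b.evalT v
  | neg a => -(a.evalT v)
  | inv a => (a.evalT v)⁻¹

def subst (σ : α → Term β) : Term α → Term β
  | one => one
  | var i => σ i
  | add a b => add (a.subst σ) (b.subst σ)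
  | mul a b => mul (a.subst σ) (b.subst σ)
  | neg a => neg (a.subst σ)
  | inv a => inv (a.subst σ)

lemma evalT_subst (σ : α → Term β) (v : β → K) (t : Term α) :
    (t.subst σ).evalT v = t.evalT (fun i => (σ i).evalT v) := by
  induction t <;> simp [subst, evalT, *]

def subvalues [DecidableEq K] (v : α → K) : Term α → Finset K
  | one => {1}
  | var i => {v i}
  | add a b => a.subvalues v ∪ b.subvalues v ∪ {a.evalT v + b.evalT v}
  | mul a b => a.subvalues v ∪ b.subvalues v ∪ {a.evalT v * b.evalT v}
  | neg a => a.subvalues v ∪ {-(a.evalT v)}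
  | inv a => a.subvalues v ∪ {(a.evalT v)⁻¹}

lemma evalT_mem_subvalues [DecidableEq K] (v : α → K) (t : Term α) :
    t.evalT v ∈ t.subvalues v := by
  cases t <;> simp [subvalues, evalT]

lemma arith_map_zero {A : Set K} {f : K → K} (hf : ArithmeticMap A f)
    (h0 : (0 : K) ∈ A) : f 0 = 0 := by
  have h := hf.2.1 0 0 h0 h0 (by simpa using h0)
  rw [add_zero] at h
  exact left_eq_add.mp h

/-- Key lemma: an arithmetic map on a set containing all subterm values of `t`
commutes with the evaluation of `t`. -/
lemma map_evalT [DecidableEq K] {A : Finset K} {f : K → K}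
    (hf : ArithmeticMap (↑A : Set K) f) (h0 : (0 : K) ∈ A) (h1 : (1 : K) ∈ A) :
    ∀ (t : Term α) (v : α → K), t.subvalues v ⊆ A →
      f (t.evalT v) = t.evalT (fun i => f (v i)) := by
  intro t v hsub
  induction t with
  | one => exact hf.1 h1
  | var i => rfl
  | add a b iha ihb =>
      simp only [subvalues, Finset.union_subset_iff, Finset.singleton_subset_iff] at hsub
      obtain ⟨⟨hsa, hsb⟩, hc⟩ := hsub
      have ha := hsa (evalT_mem_subvalues v a)
      have hb := hsb (evalT_mem_subvalues v b)
      have h := hf.2.1 _ _ ha hb hc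
      show f (a.evalT v + b.evalT v) = _
      rw [h, iha hsa, ihb hsb]; rfl
  | mul a b iha ihb =>
      simp only [subvalues, Finset.union_subset_iff, Finset.singleton_subset_iff] at hsub
      obtain ⟨⟨hsa, hsb⟩, hc⟩ := hsub
      have ha := hsa (evalT_mem_subvalues v a)
      have hb := hsb (evalT_mem_subvalues v b)
      have h := hf.2.2 _ _ ha hb hc
      show f (a.evalT v * b.evalT v) = _
      rw [h, iha hsa, ihb hsb]; rfl
  | neg a iha =>
      simp only [subvalues, Finset.union_subset_iff, Finset.singleton_subset_iff] at hsub
      obtain ⟨hsa, hc⟩ := hsub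
      have ha := hsa (evalT_mem_subvalues v a)
      have h := hf.2.1 _ _ ha hc (by simpa using h0)
      rw [add_neg_cancel, arith_map_zero hf h0] at h
      show f (-(a.evalT v)) = -(a.evalT fun i => f (v i))
      rw [← iha hsa]
      exact (eq_neg_of_add_eq_zero_right h.symm)
  | inv a iha =>
      simp only [subvalues, Finset.union_subset_iff, Finset.singleton_subset_iff] at hsub
      obtain ⟨hsa, hc⟩ := hsub
      have ha := hsa (evalT_mem_subvalues v a)
      show f ((a.evalT v)⁻¹) = (a.evalT fun i => f (v i))⁻¹
      rw [← iha hsa]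
      by_cases hz : a.evalT v = 0
      · rw [hz, inv_zero, arith_map_zero hf h0, inv_zero]
      · have h := hf.2.2 _ _ ha hc (by rw [mul_inv_cancel₀ hz]; exact h1)
        rw [mul_inv_cancel₀ hz, hf.1 h1] at h
        exact eq_inv_of_mul_eq_one_right h.symm

def ofNat (α : Type) : ℕ → Term α
  | 0 => add one (neg one)
  | (n + 1) => add (ofNat α n) one

lemma evalT_ofNat (v : α → K) (n : ℕ) : (ofNat α n).evalT v = n := by
  induction n with
  | zero => simp [ofNat, evalT]
  | succ n ih => simp [ofNat, evalT, ih]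

def ofInt (α : Type) : ℤ → Term α
  | Int.ofNat n => ofNat α n
  | Int.negSucc n => neg (ofNat α (n + 1))

lemma evalT_ofInt (v : α → K) (m : ℤ) : (ofInt α m).evalT v = m := by
  cases m with
  | ofNat n => simp [ofInt, evalT_ofNat]
  | negSucc n => simp [ofInt, evalT, evalT_ofNat, Int.cast_negSucc]

def ofRat (α : Type) (q : ℚ) : Term α := mul (ofInt α q.num) (inv (ofNat α q.den))

lemma evalT_ofRat (v : α → K) (q : ℚ) : (ofRat α q).evalT v = (q : K) := by
  simp [ofRat, evalT, evalT_ofInt, evalT_ofNat, Rat.cast_def, div_eq_mul_inv]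

/-- Every rational multivariate polynomial is realized by a formal field term. -/
lemma exists_term [CharZero K] (p : MvPolynomial α ℚ) :
    ∃ t : Term α, ∀ v : α → K, t.evalT v = MvPolynomial.aeval v p := by
  induction p using MvPolynomial.induction_on with
  | C a =>
      exact ⟨ofRat α a, fun v => by
        rw [evalT_ofRat, MvPolynomial.aeval_C, eq_ratCast (algebraMap ℚ K) a]⟩
  | add p q hp hq =>
      obtain ⟨t1, h1⟩ := hp
      obtain ⟨t2, h2⟩ := hq
      exact ⟨add t1 t2, fun v => by simp [evalT, h1, h2]⟩
  | mul_X p i hp =>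
      obtain ⟨t1, h1⟩ := hp
      exact ⟨mul t1 (var i), fun v => by simp [evalT, h1]⟩

end Term

end AFix

open AFix AFix.Term MvPolynomial

/-- Let `K` be a field of characteristic zero and `g(x, y) ∈ ℚ[x, y]`. If the set
`P = {u ∈ K : ∃ s ∈ K, g(u, s) = 0}` equals `{u₁, …, uₙ}` with the `uᵢ` pairwise distinct,
then for every `k ∈ {1, …, n}` the value of the `k`-th elementary symmetric polynomial at
`(u₁, …, uₙ)` is an arithmetically fixed element of `K`. -/
theorem esymm_arithFixed (K : Type*) [Field K] [CharZero K]
    (g : MvPolynomial (Fin 2) ℚ) (n : ℕ) (u : Fin n → K)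
    (hinj : Function.Injective u)
    (hP : {x : K | ∃ s : K, MvPolynomial.aeval ![x, s] g = 0} = Set.range u) :
    ∀ k : ℕ, 1 ≤ k → k ≤ n →
      ArithFixed (MvPolynomial.eval u (MvPolynomial.esymm (Fin n) K k)) := by
  classical
  intro k _ _
  -- witnesses sᵢ for each uᵢ
  have hu : ∀ i : Fin n, ∃ s : K, MvPolynomial.aeval ![u i, s] g = 0 := by
    intro i
    have : u i ∈ Set.range u := ⟨i, rfl⟩
    rw [← hP] at this
    exact this
  choose s hs using hu
  -- terms
  obtain ⟨tg, htg⟩ := Term.exists_term (K := K) g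
  obtain ⟨te, hte⟩ := Term.exists_term (K := K) (esymm (Fin n) ℚ k)
  set ι := (Fin n ⊕ Fin n)
  set w : ι → K := Sum.elim u s with hw
  -- term computing g(uᵢ, sᵢ)
  set G : Fin n → Term ι := fun i =>
    tg.subst ![Term.var (Sum.inl i), Term.var (Sum.inr i)] with hG
  -- term witnessing injectivity on {uᵢ}
  set C : Fin n → Fin n → Term ι := fun i j =>
    Term.mul (Term.add (Term.var (Sum.inl i)) (Term.neg (Term.var (Sum.inl j))))
      (Term.inv (Term.add (Term.var (Sum.inl i)) (Term.neg (Term.var (Sum.inl j)))))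
    with hC
  -- term computing the symmetric function value
  set E : Term ι := te.subst (fun i => Term.var (Sum.inl i)) with hE
  set A : Finset K :=
    ({0, 1} : Finset K) ∪ (Finset.univ.biUnion fun i : Fin n => (G i).subvalues w)
      ∪ (Finset.univ.biUnion fun p : Fin n × Fin n => (C p.1 p.2).subvalues w)
      ∪ E.subvalues w with hA
  have h0 : (0 : K) ∈ A := by simp [hA]
  have h1 : (1 : K) ∈ A := by simp [hA]
  have hsubG : ∀ i, (G i).subvalues w ⊆ A := by
    intro i x hx
    simp only [hA, Finset.mem_union, Finset.mem_biUnion]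
    exact Or.inl (Or.inl (Or.inr ⟨i, Finset.mem_univ i, hx⟩))
  have hsubC : ∀ i j, (C i j).subvalues w ⊆ A := by
    intro i j x hx
    simp only [hA, Finset.mem_union, Finset.mem_biUnion]
    exact Or.inl (Or.inr ⟨(i, j), Finset.mem_univ _, hx⟩)
  have hsubE : E.subvalues w ⊆ A := by
    intro x hx
    simp only [hA, Finset.mem_union]
    exact Or.inr hx
  -- the value r
  have hEval : E.evalT w = MvPolynomial.eval u (esymm (Fin n) K k) := by
    rw [hE, Term.evalT_subst, hte]
    show (aeval u) (esymm (Fin n) ℚ k) = _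
    rw [aeval_def, ← eval_map, map_esymm]
  refine ⟨A, ?_, ?_⟩
  · rw [← hEval]; exact hsubE (Term.evalT_mem_subvalues w E)
  intro f hf
  -- f maps each uᵢ into the range of u
  have hmemP : ∀ i : Fin n, f (u i) ∈ Set.range u := by
    intro i
    have h := Term.map_evalT hf h0 h1 (G i) w (hsubG i)
    have hGval : (G i).evalT w = 0 := by
      rw [hG, Term.evalT_subst]
      have e1 : (fun a => (![Term.var (Sum.inl i), Term.var (Sum.inr i)] a).evalT w)
          = ![u i, s i] := by
        funext a
        fin_cases a <;> rfl
      rw [e1, htg, hs i]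
    have hGval' : (G i).evalT (fun x => f (w x)) = aeval ![f (u i), f (s i)] g := by
      rw [hG, Term.evalT_subst]
      have e2 : (fun a =>
          (![Term.var (Sum.inl i), Term.var (Sum.inr i)] a).evalT (fun x => f (w x)))
          = ![f (u i), f (s i)] := by
        funext a
        fin_cases a <;> rfl
      rw [e2, htg]
    rw [hGval, hGval', Term.arith_map_zero hf h0] at h
    rw [← hP]
    exact ⟨f (s i), h.symm⟩
  -- f is injective on the uᵢ
  have hfinj : ∀ i j : Fin n, f (u i) = f (u j) → i = j := by
    intro i j hij
    by_contra hne
    have h := Term.map_evalT hf h0 h1 (C i j) w (hsubC i j)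
    have hd : u i - u j ≠ 0 := sub_ne_zero.mpr (fun e => hne (hinj e))
    have hCval : (C i j).evalT w = 1 := by
      show (u i + -u j) * (u i + -u j)⁻¹ = 1
      rw [← sub_eq_add_neg]
      exact mul_inv_cancel₀ hd
    have hCval' : (C i j).evalT (fun x => f (w x))
        = (f (u i) + -f (u j)) * (f (u i) + -f (u j))⁻¹ := rfl
    rw [hCval, hf.1 h1, hCval', hij, add_neg_cancel, inv_zero, mul_zero] at h
    exact one_ne_zero h
  -- build the permutation
  have hψ : ∀ i : Fin n, ∃ j : Fin n, u j = f (u i) := fun i => hmemP i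
  choose ψ hψ using hψ
  have hψinj : Function.Injective ψ := by
    intro i j hij
    exact hfinj i j (by rw [← hψ i, ← hψ j, hij])
  have hψbij : Function.Bijective ψ := Finite.injective_iff_bijective.mp hψinj
  let σ : Equiv.Perm (Fin n) := Equiv.ofBijective ψ hψbij
  -- conclude
  have key := Term.map_evalT hf h0 h1 E w hsubE
  have hE' : E.evalT (fun x => f (w x)) = aeval (fun i => f (u i)) (esymm (Fin n) ℚ k) := by
    rw [hE, Term.evalT_subst, hte]; rfl
  have hcomp : (fun i => f (u i)) = u ∘ σ := by
    funext i
    exact (hψ i).symm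
  rw [hEval] at key
  rw [key, hE', hcomp, ← aeval_rename, (esymm_isSymmetric (Fin n) ℚ k) σ]
  rw [aeval_def, ← eval_map, map_esymm]
end

section
/- Let K be a field of characteristic zero and suppose v ∈ K̃ is transcendental over ℚ. Then every element of the subfield ℚ(v) of K generated by v over the prime field belongs to K̃, and every element of ℚ(v) not in the prime field is transcendental over ℚ. -/
namespace ArithHelp

variable {K : Type*} [Field K]

theorem map_mono {A B : Set K} {f : K → K} (h : A ⊆ B) (hf : ArithmeticMap B f) :
    ArithmeticMap A f :=
  ⟨fun h1 => hf.1 (h h1),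
   fun a b ha hb hab => hf.2.1 a b (h ha) (h hb) (h hab),
   fun a b ha hb hab => hf.2.2 a b (h ha) (h hb) (h hab)⟩

theorem fixed_zero : ArithFixed (0 : K) := by
  refine ⟨{0}, by simp, fun f hf => ?_⟩
  have h := hf.2.1 0 0 (by simp) (by simp) (by simp)
  rw [add_zero] at h
  linear_combination -h

theorem fixed_one : ArithFixed (1 : K) :=
  ⟨{1}, by simp, fun f hf => hf.1 (by simp)⟩

theorem fixed_add {r s : K} (hr : ArithFixed r) (hs : ArithFixed s) : ArithFixed (r + s) := by
  classical
  obtain ⟨A, hrA, hA⟩ := hr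
  obtain ⟨B, hsB, hB⟩ := hs
  refine ⟨insert (r + s) (A ∪ B), by simp, fun f hf => ?_⟩
  have hsubA : (↑A : Set K) ⊆ ↑(insert (r + s) (A ∪ B)) := by
    intro x hx; simp only [Finset.coe_insert, Finset.coe_union, Set.mem_insert_iff,
      Set.mem_union]; tauto
  have hsubB : (↑B : Set K) ⊆ ↑(insert (r + s) (A ∪ B)) := by
    intro x hx; simp only [Finset.coe_insert, Finset.coe_union, Set.mem_insert_iff,
      Set.mem_union]; tauto
  have hfr := hA f (map_mono hsubA hf)
  have hfs := hB f (map_mono hsubB hf)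
  have h := hf.2.1 r s (hsubA hrA) (hsubB hsB) (by simp)
  rw [h, hfr, hfs]

theorem fixed_mul {r s : K} (hr : ArithFixed r) (hs : ArithFixed s) : ArithFixed (r * s) := by
  classical
  obtain ⟨A, hrA, hA⟩ := hr
  obtain ⟨B, hsB, hB⟩ := hs
  refine ⟨insert (r * s) (A ∪ B), by simp, fun f hf => ?_⟩
  have hsubA : (↑A : Set K) ⊆ ↑(insert (r * s) (A ∪ B)) := by
    intro x hx; simp only [Finset.coe_insert, Finset.coe_union, Set.mem_insert_iff,
      Set.mem_union]; tauto
  have hsubB : (↑B : Set K) ⊆ ↑(insert (r * s) (A ∪ B)) := by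
    intro x hx; simp only [Finset.coe_insert, Finset.coe_union, Set.mem_insert_iff,
      Set.mem_union]; tauto
  have hfr := hA f (map_mono hsubA hf)
  have hfs := hB f (map_mono hsubB hf)
  have h := hf.2.2 r s (hsubA hrA) (hsubB hsB) (by simp)
  rw [h, hfr, hfs]

theorem fixed_neg {r : K} (hr : ArithFixed r) : ArithFixed (-r) := by
  classical
  obtain ⟨A, hrA, hA⟩ := hr
  refine ⟨insert (-r) (insert 0 A), by simp, fun f hf => ?_⟩
  have hsubA : (↑A : Set K) ⊆ ↑(insert (-r) (insert 0 A)) := by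
    intro x hx; simp only [Finset.coe_insert, Set.mem_insert_iff]; tauto
  have hfr := hA f (map_mono hsubA hf)
  have h0 : f 0 = 0 := by
    have h := hf.2.1 0 0 (by simp) (by simp) (by simp)
    rw [add_zero] at h
    linear_combination -h
  have h := hf.2.1 r (-r) (hsubA hrA) (by simp) (by simp)
  rw [add_neg_cancel, h0, hfr] at h
  linear_combination -h

theorem fixed_inv {r : K} (hr : ArithFixed r) : ArithFixed r⁻¹ := by
  rcases eq_or_ne r 0 with rfl | hr0
  · simpa using fixed_zero
  classical
  obtain ⟨A, hrA, hA⟩ := hr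
  refine ⟨insert r⁻¹ (insert 1 A), by simp, fun f hf => ?_⟩
  have hsubA : (↑A : Set K) ⊆ ↑(insert r⁻¹ (insert 1 A)) := by
    intro x hx; simp only [Finset.coe_insert, Set.mem_insert_iff]; tauto
  have hfr := hA f (map_mono hsubA hf)
  have h1 : f 1 = 1 := hf.1 (by simp)
  have h := hf.2.2 r r⁻¹ (hsubA hrA) (by simp) (by simp [mul_inv_cancel₀ hr0])
  rw [mul_inv_cancel₀ hr0, h1, hfr] at h
  have : r * f r⁻¹ = r * r⁻¹ := by rw [mul_inv_cancel₀ hr0, ← h]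
  exact mul_left_cancel₀ hr0 this

/-- The arithmetically fixed elements form a subfield. -/
def arithSubfield (K : Type*) [Field K] : Subfield K where
  carrier := {r | ArithFixed r}
  one_mem' := fixed_one
  zero_mem' := fixed_zero
  add_mem' := fixed_add
  mul_mem' := fixed_mul
  neg_mem' := fixed_neg
  inv_mem' := fun _ => fixed_inv

end ArithHelp

/-- If `K` has characteristic zero and `v ∈ K̃` is transcendental over `ℚ`, then every element
of the subfield `ℚ(v)` of `K` generated by `v` (over the prime field) is arithmetically fixed,
and every element of `ℚ(v)` outside the prime field is transcendental over `ℚ`. -/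
theorem subfield_gen_by_transcendental_arithFixed (K : Type*) [Field K] [CharZero K]
    (v : K) (hv : ArithFixed v) (hvt : Transcendental ℚ v) :
    (∀ x ∈ Subfield.closure ({v} : Set K), ArithFixed x) ∧
    (∀ x ∈ Subfield.closure ({v} : Set K), x ∉ (⊥ : Subfield K) → Transcendental ℚ x) := by
  constructor
  · intro x hx
    exact Subfield.closure_le.2 (Set.singleton_subset_iff.2 hv :
      ({v} : Set K) ⊆ (ArithHelp.arithSubfield K : Set K)) hx
  · intro x hx hxb ha
    -- x algebraic over ℚ, x ∈ ℚ(v), x ∉ ⊥ : derive False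
    rw [Subfield.mem_closure_iff] at hx
    obtain ⟨y, hy, z, hz, hyz⟩ := hx
    have hadj : ∀ w : K, w ∈ Subring.closure ({v} : Set K) →
        ∃ p : Polynomial ℤ, Polynomial.aeval v p = w := by
      intro w hw
      have hw' : w ∈ Algebra.adjoin ℤ ({v} : Set K) := by
        rw [Algebra.adjoin_int]; exact hw
      rw [Algebra.adjoin_singleton_eq_range_aeval] at hw'
      exact hw'
    obtain ⟨p, hp⟩ := hadj y hy
    obtain ⟨q, hq⟩ := hadj z hz
    rcases eq_or_ne z 0 with rfl | hz0
    · exact hxb (by rw [← hyz, div_zero]; exact Subfield.zero_mem _)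
    have hq0 : q ≠ 0 := by rintro rfl; simp at hq; exact hz0 hq.symm
    have hxz : x * z = y := by rw [← hyz, div_mul_cancel₀ _ hz0]
    -- intermediate field ℚ(x)
    set L := IntermediateField.adjoin ℚ ({x} : Set K) with hL
    have hxL : x ∈ L := IntermediateField.mem_adjoin_simple_self ℚ x
    set x' : L := ⟨x, hxL⟩ with hx'
    haveI : FiniteDimensional ℚ L :=
      IntermediateField.adjoin.finiteDimensional ha.isIntegral
    haveI : Algebra.IsIntegral ℚ L := Algebra.IsIntegral.of_finite ℚ L
    set P : Polynomial L :=
      Polynomial.C x' * (q.map (algebraMap ℤ L)) - (p.map (algebraMap ℤ L)) with hP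
    have hPv : Polynomial.aeval v P = 0 := by
      rw [hP]
      rw [map_sub, map_mul, Polynomial.aeval_C, Polynomial.aeval_map_algebraMap,
        Polynomial.aeval_map_algebraMap, hp, hq]
      show x * z - y = 0
      rw [hxz, sub_self]
    rcases eq_or_ne P 0 with hP0 | hP0
    · -- then x is a ratio of integers, so x ∈ ⊥
      obtain ⟨i, hi'⟩ := Polynomial.support_nonempty.2 hq0
      have hi : q.coeff i ≠ 0 := Polynomial.mem_support_iff.1 hi'
      have hc : (Polynomial.C x' * (q.map (algebraMap ℤ L))).coeff i
          = (p.map (algebraMap ℤ L)).coeff i := by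
        have := sub_eq_zero.1 (hP ▸ hP0)
        rw [this]
      rw [Polynomial.coeff_C_mul, Polynomial.coeff_map, Polynomial.coeff_map] at hc
      -- cast to K
      have hcK : x * ((q.coeff i : ℤ) : K) = ((p.coeff i : ℤ) : K) := by
        have := congrArg (fun t : L => (t : K)) hc
        simpa using this
      have hqi : ((q.coeff i : ℤ) : K) ≠ 0 := by exact_mod_cast hi
      have : x = ((p.coeff i : ℤ) : K) / ((q.coeff i : ℤ) : K) := by
        field_simp
        linear_combination hcK
      exact hxb (this ▸ Subfield.div_mem _ (Subfield.intCast_mem _ _) (Subfield.intCast_mem _ _))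
    · have halg : IsAlgebraic L v := ⟨P, hP0, hPv⟩
      have hint : IsIntegral L v := halg.isIntegral
      have : IsIntegral ℚ v := isIntegral_trans v hint
      exact hvt this.isAlgebraic
end

section
/- Let p be a prime number. Then there are no elements u, v in the field ℚ_p of p-adic numbers satisfying p·u⁴ + p²·v⁴ = −1; that is, {(u, v) ∈ ℚ_p × ℚ_p : p·u⁴ + p²·v⁴ = −1} = ∅. -/
lemma padic_aux (p : ℕ) [Fact p.Prime] (k : ℤ) (z : ℚ_[p]) (hz : z ≠ 0) :
    ‖(p : ℚ_[p]) ^ k * z ^ 4‖ = (p : ℝ) ^ (-(k + 4 * z.valuation)) := by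
  have hp : (p : ℚ_[p]) ≠ 0 := by
    exact_mod_cast (Fact.out (p := p.Prime)).ne_zero
  rw [norm_mul, norm_zpow, norm_pow, Padic.norm_p,
    Padic.norm_eq_zpow_neg_valuation hz]
  have hpR : (p : ℝ) ≠ 0 := by
    exact_mod_cast (Fact.out (p := p.Prime)).ne_zero
  rw [← zpow_natCast ((p : ℝ) ^ (-z.valuation)), ← zpow_mul, inv_zpow, ← zpow_neg,
    ← zpow_add₀ hpR]
  ring_nf

/-- For any prime `p`, there are no `u, v ∈ ℚ_p` with `p·u⁴ + p²·v⁴ = -1`. -/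
theorem padic_quartic_no_solution (p : ℕ) [Fact p.Prime] :
    {uv : ℚ_[p] × ℚ_[p] |
      (p : ℚ_[p]) * uv.1 ^ 4 + (p : ℚ_[p]) ^ 2 * uv.2 ^ 4 = -1} = ∅ := by
  have hp := Fact.out (p := p.Prime)
  have hp1 : (1 : ℝ) < p := by exact_mod_cast hp.one_lt
  have hinj : Function.Injective fun n : ℤ => (p : ℝ) ^ n :=
    (zpow_right_strictMono₀ hp1).injective
  ext ⟨u, v⟩
  simp only [Set.mem_setOf_eq, Set.mem_empty_iff_false, iff_false]
  intro h
  have hA : ((p : ℚ_[p]) * u ^ 4) = (p : ℚ_[p]) ^ (1 : ℤ) * u ^ 4 := by rw [zpow_one]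
  have hnorm1 : ‖(p : ℚ_[p]) * u ^ 4 + (p : ℚ_[p]) ^ 2 * v ^ 4‖ = 1 := by
    rw [h]; simp
  rcases eq_or_ne u 0 with hu | hu
  · rcases eq_or_ne v 0 with hv | hv
    · simp [hu, hv] at h
    · have hB : ((p : ℚ_[p]) ^ 2 * v ^ 4) = (p : ℚ_[p]) ^ (2 : ℤ) * v ^ 4 := by
        norm_cast
      rw [hu] at hnorm1
      simp only [ne_eq, OfNat.ofNat_ne_zero, not_false_eq_true, zero_pow, mul_zero, zero_add] at hnorm1
      rw [hB, padic_aux p 2 v hv] at hnorm1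
      have : -(2 + 4 * v.valuation) = 0 := by
        apply hinj
        simpa using hnorm1
      omega
  · rcases eq_or_ne v 0 with hv | hv
    · rw [hv] at hnorm1
      simp only [ne_eq, OfNat.ofNat_ne_zero, not_false_eq_true, zero_pow, mul_zero, add_zero] at hnorm1
      rw [hA, padic_aux p 1 u hu] at hnorm1
      have : -(1 + 4 * u.valuation) = 0 := by
        apply hinj
        simpa using hnorm1
      omega
    · have hB : ((p : ℚ_[p]) ^ 2 * v ^ 4) = (p : ℚ_[p]) ^ (2 : ℤ) * v ^ 4 := by
        norm_cast
      have hne : ‖(p : ℚ_[p]) * u ^ 4‖ ≠ ‖(p : ℚ_[p]) ^ 2 * v ^ 4‖ := by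
        rw [hA, hB, padic_aux p 1 u hu, padic_aux p 2 v hv]
        intro hcon
        have := hinj hcon
        omega
      rw [Padic.add_eq_max_of_ne hne] at hnorm1
      rcases max_cases ‖(p : ℚ_[p]) * u ^ 4‖ ‖(p : ℚ_[p]) ^ 2 * v ^ 4‖ with
        ⟨heq, _⟩ | ⟨heq, _⟩ <;> rw [heq] at hnorm1
      · rw [hA, padic_aux p 1 u hu] at hnorm1
        have : -(1 + 4 * u.valuation) = 0 := by
          apply hinj; simpa using hnorm1
        omega
      · rw [hB, padic_aux p 2 v hv] at hnorm1
        have : -(2 + 4 * v.valuation) = 0 := by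
          apply hinj; simpa using hnorm1
        omega
end
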